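/- If an edge e of a signed graph Σ lies in a unique positive circle C, then every bridge of C is balanced (contains no negative circle). -/

import Mathlib

/-!
Let `N` be a negative circle whose edges avoid `C` (a circle inside a bridge is one). The key
fact: if `S` is a path through `e` and `T₁`, `T₂` are paths joining its ends that meet `S` only
there and leave `C`, then each `Tᵢ ∪ S` is a circle through `e` other than `C`, hence negative,
so `T₁` and `T₂` have the same sign.

If `N` meets `C` twice, an arc of `C` through `e` between two vertices of `N`, shrunk until no
other vertex of `N` lies on it, and the two arcs of `N` between its ends contradict the key fact.
Otherwise `N` is tied to `C` by a path `P` meeting `N` and `C` only at its ends. As `G` has no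
cut vertex, some `N`–`(C ∪ P)` path `B` avoids the foot `u` of `P`; let `R₁`, `R₂` be the two
arcs of `N` from `u` to the start of `B`. If `B` ends on `C` off `P`, the paths `P⁻¹ Rᵢ B`
contradict the key fact. If `B` ends on `P`, one of the two circles made of `Rᵢ`, `B` and the
part of `P` between them is negative and is tied to `C` by a shorter part of `P`, so we conclude
by induction on the length of `P`.
-/

open SimpleGraph Finset

variable {V : Type*} [DecidableEq V]

/-- The sign (product of edge signs) of a finite set of edges. -/
def esign (σ : Sym2 V → ℤˣ) (s : Finset (Sym2 V)) : ℤˣ := ∏ e ∈ s, σ e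

/-- The sign of a walk: the product of the signs of its edges. -/
def wsign (σ : Sym2 V → ℤˣ) {G : SimpleGraph V} {u v : V} (w : G.Walk u v) : ℤˣ :=
  (w.edges.map σ).prod

/-- `s` is the edge set of a circle (cycle) of `G`. -/
def IsCircleOf (G : SimpleGraph V) (s : Finset (Sym2 V)) : Prop :=
  ∃ (a : V) (w : G.Walk a a), w.IsCycle ∧ w.edges.toFinset = s

/-- The signature obtained from `σ` by switching with `ζ`. -/
def switchSign (σ : Sym2 V → ℤˣ) (ζ : V → ℤˣ) : Sym2 V → ℤˣ :=
  fun e => Sym2.lift ⟨fun a b => ζ a * σ s(a, b) * ζ b, by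
    intro a b
    simp only []
    rw [Sym2.eq_swap]
    simp [mul_comm, mul_assoc, mul_left_comm]⟩ e

/-- `b` is a balancing edge: one can switch so that `b` is the unique negative edge. -/
def IsBalancingEdge (G : SimpleGraph V) (σ : Sym2 V → ℤˣ) (b : Sym2 V) : Prop :=
  b ∈ G.edgeSet ∧ ∃ ζ : V → ℤˣ, ∀ f ∈ G.edgeSet, (switchSign σ ζ f = -1 ↔ f = b)

/-- `F` is the edge set of a bridge of the circle `w` in `G`: either a single
chord of `w`, or the edge set attached to a connected component of `G` minus
the vertices of `w`. -/
def IsBridgeOf {a : V} (G : SimpleGraph V) (w : G.Walk a a) (F : Set (Sym2 V)) : Prop :=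
  (∃ x y : V, x ≠ y ∧ x ∈ w.support ∧ y ∈ w.support ∧ G.Adj x y ∧
      s(x, y) ∉ w.edges ∧ F = {s(x, y)}) ∨
  (∃ D : Set V, D.Nonempty ∧ (∀ x ∈ D, x ∉ w.support) ∧ (G.induce D).Connected ∧
      (∀ x ∈ D, ∀ y : V, G.Adj x y → y ∈ D ∨ y ∈ w.support) ∧
      F = {e | e ∈ G.edgeSet ∧ ∃ x ∈ D, x ∈ e})

/-- The vertices of attachment of a bridge with edge set `F`. -/
def attachments {a : V} (G : SimpleGraph V) (w : G.Walk a a) (F : Set (Sym2 V)) : Set V :=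
  {x | x ∈ w.support ∧ ∃ e ∈ F, x ∈ e}

/-- A path through a bridge: a path between two distinct vertices of attachment
all of whose edges lie in the bridge. -/
def IsPathThrough {a : V} (G : SimpleGraph V) (w : G.Walk a a) (F : Set (Sym2 V))
    {x y : V} (Q : G.Walk x y) : Prop :=
  x ≠ y ∧ x ∈ attachments G w F ∧ y ∈ attachments G w F ∧ Q.IsPath ∧
    ∀ e ∈ Q.edges, e ∈ F

/-- `G` is a block: it is connected and has no cutpoint. -/
def IsBlock (G : SimpleGraph V) : Prop :=
  G.Connected ∧ ∀ v : V, ((⊤ : G.Subgraph).deleteVerts {v}).coe.Connected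


namespace SimpleGraph.Walk

variable {G : SimpleGraph V} {u v w x y : V}

omit [DecidableEq V] in
lemma IsPath.start_notMem_support_tail {p : G.Walk u v} (hp : p.IsPath) :
    u ∉ p.support.tail := by
  have := hp.support_nodup
  rw [← cons_tail_support] at this
  exact (List.nodup_cons.mp this).1

omit [DecidableEq V] in
lemma IsPath.append {p : G.Walk u v} {q : G.Walk v w} (hp : p.IsPath) (hq : q.IsPath)
    (h : ∀ x ∈ p.support, x ∈ q.support → x = v) : (p.append q).IsPath := by
  rw [isPath_def, support_append]
  refine hp.support_nodup.append hq.support_nodup.tail fun x hxp hxq => ?_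
  exact hq.start_notMem_support_tail (h x hxp (List.mem_of_mem_tail hxq) ▸ hxq)

omit [DecidableEq V] in
lemma IsPath.isCycle_append_of_inter {p : G.Walk u v} {q : G.Walk v u} (hp : p.IsPath)
    (hq : q.IsPath) (h : ∀ x ∈ p.support, x ∈ q.support → x = u ∨ x = v)
    (hn : 1 < p.length ∨ 1 < q.length) : (p.append q).IsCycle := by
  refine hp.isCycle_append hq (fun x hxp hxq => ?_) hn
  rcases h x (List.mem_of_mem_tail hxp) (List.mem_of_mem_tail hxq) with rfl | rfl
  · exact hp.start_notMem_support_tail hxp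
  · exact hq.start_notMem_support_tail hxq

omit [DecidableEq V] in
lemma edges_eq_of_length_eq_one {p : G.Walk u v} (h : p.length = 1) : p.edges = [s(u, v)] := by
  cases p with
  | nil => simp at h
  | cons _ q => cases q with
    | nil => simp
    | cons _ _ => simp at h

lemma IsPath.eq_of_mem_takeUntil_of_mem_dropUntil {p : G.Walk u v} (hp : p.IsPath)
    (hw : w ∈ p.support) (hx₁ : x ∈ (p.takeUntil w hw).support)
    (hx₂ : x ∈ (p.dropUntil w hw).support) : x = w := by
  by_contra hxw
  rw [← p.take_spec hw] at hp
  exact hp.ne_of_mem_support_of_append hxw hx₁ hx₂ rfl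

lemma IsCycle.isPath_dropUntil {c : G.Walk v v} (hc : c.IsCycle) (hw : w ∈ c.support)
    (hwv : w ≠ v) : (c.dropUntil w hw).IsPath := by
  rw [← c.take_spec hw] at hc
  exact hc.isPath_of_append_right (not_nil_of_ne hwv.symm)

omit [DecidableEq V] in
lemma IsCycle.exists_mem_support_ne {c : G.Walk v v} (hc : c.IsCycle) (u : V) :
    ∃ w ∈ c.support, w ≠ u := by
  cases c with
  | nil => exact absurd hc not_isCycle_nil
  | @cons _ b _ hadj p =>
    by_cases hvu : v = u
    · exact ⟨b, by simp, fun hbu => hadj.ne (hvu.trans hbu.symm)⟩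
    · exact ⟨v, by simp, hvu⟩

lemma IsCycle.exists_mem_edges_ne {c : G.Walk v v} (hc : c.IsCycle) (f : Sym2 V) :
    ∃ g ∈ c.edges, g ≠ f := by
  by_contra! h
  have hcard : c.edges.toFinset.card ≤ 1 := Finset.card_le_one.mpr fun g hg g' hg' => by
    rw [h g (List.mem_toFinset.mp hg), h g' (List.mem_toFinset.mp hg')]
  rw [List.toFinset_card_of_nodup hc.edges_nodup, length_edges] at hcard
  have := hc.three_le_length
  omega

lemma IsCycle.exists_isPath_mem_edges {c : G.Walk v v} (hc : c.IsCycle) {e : Sym2 V}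
    (he : e ∈ c.edges) (hx : x ∈ c.support) (hy : y ∈ c.support) (hxy : x ≠ y) :
    ∃ S : G.Walk x y, S.IsPath ∧ e ∈ S.edges ∧ S.support ⊆ c.support := by
  have hc' := hc.rotate hx
  have hy' : y ∈ (c.rotate x hx).support := (mem_support_rotate_iff ..).mpr hy
  have he' : e ∈ ((c.rotate x hx).takeUntil y hy').edges ++
      ((c.rotate x hx).dropUntil y hy').edges := by
    rw [← edges_append, take_spec]
    exact (c.rotate_edges x hx).perm.mem_iff.mpr he
  have hsub : (c.rotate x hx).support ⊆ c.support := fun z hz =>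
    (mem_support_rotate_iff ..).mp hz
  rcases List.mem_append.mp he' with heS | heS
  · exact ⟨_, hc'.isPath_takeUntil hy', heS,
      fun z hz => hsub ((c.rotate x hx).support_takeUntil_subset_support hy' hz)⟩
  · refine ⟨_, (hc'.isPath_dropUntil hy' hxy.symm).reverse, by simpa using heS, fun z hz => ?_⟩
    rw [support_reverse, List.mem_reverse] at hz
    exact hsub ((c.rotate x hx).support_dropUntil_subset_support hy' hz)

lemma IsPath.exists_isPath_mem_edges_inter_subset (X : Set V) {S : G.Walk x y}
    (hS : S.IsPath) (hxy : x ≠ y) (hx : x ∈ X) (hy : y ∈ X) {e : Sym2 V} (he : e ∈ S.edges) :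
    ∃ (x' y' : V) (S' : G.Walk x' y'), x' ≠ y' ∧ x' ∈ X ∧ y' ∈ X ∧ S'.IsPath ∧ e ∈ S'.edges ∧
      ∀ z ∈ S'.support, z ∈ X → z = x' ∨ z = y' := by
  induction hn : S.length using Nat.strong_induction_on generalizing x y with
  | _ n ih =>
  by_cases hz : ∃ z ∈ S.support, z ∈ X ∧ z ≠ x ∧ z ≠ y
  · obtain ⟨z, hzS, hzX, hzx, hzy⟩ := hz
    rw [← S.take_spec hzS, edges_append, List.mem_append] at he
    rcases he with he | he
    · exact ih _ (hn ▸ S.length_takeUntil_lt_length hzS hzy) (hS.takeUntil hzS) hzx.symm hx hzX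
        he rfl
    · exact ih _ (hn ▸ S.length_dropUntil_lt_length hzS hzx) (hS.dropUntil hzS) hzy hzX hy
        he rfl
  · push Not at hz
    exact ⟨x, y, S, hxy, hx, hy, hS, he, fun z hzS hzX => or_iff_not_imp_left.2 (hz z hzS hzX)⟩

omit [DecidableEq V] in
lemma exists_eq_append_first_mem (p : G.Walk u v) (X : Set V) (h : ∃ x ∈ p.support, x ∈ X) :
    ∃ (x : V) (p₁ : G.Walk u x) (p₂ : G.Walk x v), p = p₁.append p₂ ∧ x ∈ X ∧
      ∀ y ∈ p₁.support, y ∈ X → y = x := by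
  induction p with
  | nil =>
    obtain ⟨x, hx, hxX⟩ := h
    rw [support_nil, List.mem_singleton] at hx
    subst hx
    exact ⟨_, nil, nil, rfl, hxX, by simp⟩
  | @cons u _ _ hadj p ih =>
    by_cases hu : u ∈ X
    · exact ⟨u, nil, cons hadj p, rfl, hu, by simp⟩
    · obtain ⟨x, p₁, p₂, rfl, hx, hp₁⟩ := ih (by simpa [hu] using h)
      refine ⟨x, cons hadj p₁, p₂, rfl, hx, fun y hy hyX => ?_⟩
      rcases List.mem_cons.mp hy with rfl | hy
      exacts [absurd hyX hu, hp₁ y hy hyX]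

/-- An `X`–`Y` path in the sense of Diestel. -/
structure IsPathBetween (X Y : Set V) (p : G.Walk u v) : Prop where
  isPath : p.IsPath
  start_mem : u ∈ X
  end_mem : v ∈ Y
  eq_start : ∀ x ∈ p.support, x ∈ X → x = u
  eq_end : ∀ x ∈ p.support, x ∈ Y → x = v

lemma exists_isPathBetween (p : G.Walk u v) {X Y : Set V} (hu : u ∈ X) (hv : v ∈ Y) :
    ∃ (x y : V) (q : G.Walk x y), q.IsPathBetween X Y ∧ q.support ⊆ p.support := by
  obtain ⟨y, p₁, p₂, rfl, hy, hp₁⟩ := p.exists_eq_append_first_mem Y ⟨v, p.end_mem_support, hv⟩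
  obtain ⟨x, q₁, q₂, hq, hx, hq₁⟩ := p₁.reverse.exists_eq_append_first_mem X ⟨u, by simp, hu⟩
  have hq₁p₁ : q₁.support ⊆ p₁.support := fun z hz => by
    have : z ∈ p₁.reverse.support := hq ▸ support_subset_support_append_left q₁ q₂ hz
    simpa using this
  have hsub : q₁.bypass.reverse.support ⊆ q₁.support := fun z hz =>
    q₁.support_bypass_subset_support (by simpa using hz)
  refine ⟨x, y, q₁.bypass.reverse, ⟨q₁.bypass_isPath.reverse, hx, hy,
    fun z hz hzX => hq₁ z (hsub hz) hzX, fun z hz hzY => hp₁ z (hq₁p₁ (hsub hz)) hzY⟩,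
    fun z hz => support_subset_support_append_left p₁ p₂ (hq₁p₁ (hsub hz))⟩

end SimpleGraph.Walk

open SimpleGraph.Walk

section Signs

variable {G : SimpleGraph V} {σ : Sym2 V → ℤˣ} {u v w x y z : V}

omit [DecidableEq V] in
lemma wsign_append (p : G.Walk u v) (q : G.Walk v w) :
    wsign σ (p.append q) = wsign σ p * wsign σ q := by
  simp [wsign, edges_append]

omit [DecidableEq V] in
lemma wsign_reverse (p : G.Walk u v) : wsign σ p.reverse = wsign σ p := by
  simp [wsign, edges_reverse, List.prod_reverse]

lemma wsign_rotate (c : G.Walk v v) (h : u ∈ c.support) : wsign σ (c.rotate u h) = wsign σ c :=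
  ((c.rotate_edges u h).perm.map σ).prod_eq

lemma esign_edges_toFinset {p : G.Walk u v} (hp : p.IsTrail) :
    esign σ p.edges.toFinset = wsign σ p :=
  List.prod_toFinset σ hp.edges_nodup

omit [DecidableEq V] in
lemma wsign_append_append_mul (p : G.Walk x u) (r₁ r₂ : G.Walk u z) (q : G.Walk z y) :
    wsign σ (p.append (r₁.append q)) * wsign σ (p.append (r₂.append q)) =
      wsign σ r₁ * wsign σ r₂ := by
  simp only [wsign_append]
  calc _ = wsign σ r₁ * wsign σ r₂ * (wsign σ p * wsign σ p) * (wsign σ q * wsign σ q) := by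
        ac_rfl
    _ = _ := by simp only [Int.units_mul_self, mul_one]

lemma Int.units_eq_neg_one_or_of_mul_eq_neg_one {a b : ℤˣ} (h : a * b = -1) :
    a = -1 ∨ b = -1 := by
  rcases Int.units_eq_one_or a with rfl | rfl
  · exact Or.inr (by simpa using h)
  · exact Or.inl rfl

lemma SimpleGraph.Walk.IsCycle.exists_isPath_pair_wsign_mul {c : G.Walk u u} (hc : c.IsCycle)
    (hz : z ∈ c.support) (hzu : z ≠ u) :
    ∃ r₁ r₂ : G.Walk u z, r₁.IsPath ∧ r₂.IsPath ∧ r₁.support ⊆ c.support ∧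
      r₂.support ⊆ c.support ∧ r₁.edges ⊆ c.edges ∧ r₂.edges ⊆ c.edges ∧
      wsign σ r₁ * wsign σ r₂ = wsign σ c := by
  refine ⟨c.takeUntil z hz, (c.dropUntil z hz).reverse, hc.isPath_takeUntil hz,
    (hc.isPath_dropUntil hz hzu).reverse, c.support_takeUntil_subset_support hz,
    fun x hx => c.support_dropUntil_subset_support hz (by simpa using hx),
    c.edges_takeUntil_subset_edges hz,
    fun f hf => c.edges_dropUntil_subset_edges hz (by simpa using hf), ?_⟩
  rw [wsign_reverse, ← wsign_append, take_spec]

end Signs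

section Block

variable {G : SimpleGraph V} {u v x y : V}

omit [DecidableEq V] in
lemma IsBlock.exists_walk_notMem_support (hG : IsBlock G) (hu : u ≠ x) (hv : v ≠ x) :
    ∃ p : G.Walk u v, x ∉ p.support := by
  obtain ⟨p⟩ := (hG.2 x).preconnected ⟨u, by simp [hu]⟩ ⟨v, by simp [hv]⟩
  refine ⟨p.map (Subgraph.hom _), fun hx => ?_⟩
  obtain ⟨⟨y, hy⟩, -, hyx⟩ := List.mem_map.mp ((support_map _ p) ▸ hx)
  exact (show y ≠ x by simpa using hy) hyx

lemma IsBlock.exists_isPathBetween_notMem_support (hG : IsBlock G) {X Y : Set V} (hx : x ∈ X)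
    (hy : y ∈ Y) (hxu : x ≠ u) (hyu : y ≠ u) :
    ∃ (x' y' : V) (q : G.Walk x' y'), q.IsPathBetween X Y ∧ u ∉ q.support := by
  obtain ⟨p, hp⟩ := hG.exists_walk_notMem_support hxu hyu
  obtain ⟨x', y', q, hq, hqp⟩ := p.exists_isPathBetween hx hy
  exact ⟨x', y', q, hq, fun hu => hp (hqp hu)⟩

end Block

section Battery

variable {G : SimpleGraph V} {σ : Sym2 V → ℤˣ} {a u x y z q : V} {C : G.Walk a a} {e : Sym2 V}

def NoOtherPositiveCircle (σ : Sym2 V → ℤˣ) (e : Sym2 V) (C : G.Walk a a) : Prop :=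
  ∀ s, IsCircleOf G s → e ∈ s → esign σ s = 1 → s = C.edges.toFinset

lemma wsign_append_eq_neg_one (he : e ∈ C.edges) (huniq : NoOtherPositiveCircle σ e C)
    {T : G.Walk x y} {S : G.Walk y x} (hT : T.IsPath) (hS : S.IsPath) (heS : e ∈ S.edges)
    (hTS : ∀ v ∈ T.support, v ∈ S.support → v = x ∨ v = y) {f : Sym2 V} (hf : f ∈ T.edges)
    (hfC : f ∉ C.edges) : wsign σ (T.append S) = -1 := by
  have hlen : 1 < T.length ∨ 1 < S.length := by
    by_contra! h
    have hT₁ : T.length = 1 := le_antisymm h.1 (length_edges T ▸ List.length_pos_of_mem hf)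
    have hS₁ : S.length = 1 := le_antisymm h.2 (length_edges S ▸ List.length_pos_of_mem heS)
    rw [edges_eq_of_length_eq_one hT₁, List.mem_singleton] at hf
    rw [edges_eq_of_length_eq_one hS₁, List.mem_singleton, Sym2.eq_swap, ← hf] at heS
    exact hfC (heS ▸ he)
  have hcyc := hT.isCycle_append_of_inter hS hTS hlen
  rw [← esign_edges_toFinset hcyc.isTrail]
  refine (Int.units_eq_one_or _).resolve_left fun hpos => hfC ?_
  have hC := huniq _ ⟨x, _, hcyc, rfl⟩ (by simp [edges_append, heS]) hpos
  rw [← List.mem_toFinset, ← hC]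
  simp [edges_append, hf]

lemma wsign_mul_ne_neg_one_of_arc (he : e ∈ C.edges) (huniq : NoOtherPositiveCircle σ e C)
    {S : G.Walk y x} (hS : S.IsPath) (heS : e ∈ S.edges) {T₁ T₂ : G.Walk x y}
    (hT₁ : T₁.IsPath) (hT₂ : T₂.IsPath)
    (hT₁S : ∀ v ∈ T₁.support, v ∈ S.support → v = x ∨ v = y)
    (hT₂S : ∀ v ∈ T₂.support, v ∈ S.support → v = x ∨ v = y) {f₁ f₂ : Sym2 V}
    (hf₁ : f₁ ∈ T₁.edges) (hf₁C : f₁ ∉ C.edges) (hf₂ : f₂ ∈ T₂.edges) (hf₂C : f₂ ∉ C.edges) :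
    wsign σ T₁ * wsign σ T₂ ≠ -1 := by
  have h₁ := wsign_append_eq_neg_one he huniq hT₁ hS heS hT₁S hf₁ hf₁C
  have h₂ := wsign_append_eq_neg_one he huniq hT₂ hS heS hT₂S hf₂ hf₂C
  rw [wsign_append] at h₁ h₂
  rw [mul_right_cancel (h₁.trans h₂.symm), Int.units_mul_self]
  decide

lemma wsign_mul_ne_neg_one_of_inter (hC : C.IsCycle) (he : e ∈ C.edges)
    (huniq : NoOtherPositiveCircle σ e C) (hxy : x ≠ y) (hx : x ∈ C.support)
    (hy : y ∈ C.support) {T₁ T₂ : G.Walk x y} (hT₁ : T₁.IsPath) (hT₂ : T₂.IsPath)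
    (hT₁C : ∀ v ∈ T₁.support, v ∈ C.support → v = x ∨ v = y)
    (hT₂C : ∀ v ∈ T₂.support, v ∈ C.support → v = x ∨ v = y)
    (hz₁ : z ∈ T₁.support) (hz₂ : z ∈ T₂.support) (hzC : z ∉ C.support) :
    wsign σ T₁ * wsign σ T₂ ≠ -1 := by
  obtain ⟨S, hS, heS, hSC⟩ := hC.exists_isPath_mem_edges he hy hx hxy.symm
  have hedge (T : G.Walk x y) (hz : z ∈ T.support) : ∃ f ∈ T.edges, f ∉ C.edges := by
    obtain ⟨f, hf, hzf⟩ := (mem_support_iff_exists_mem_edges_of_not_nil (not_nil_of_ne hxy)).mp hz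
    exact ⟨f, hf, fun hfC => hzC (C.mem_support_of_mem_edges hfC hzf)⟩
  obtain ⟨f₁, hf₁, hf₁C⟩ := hedge T₁ hz₁
  obtain ⟨f₂, hf₂, hf₂C⟩ := hedge T₂ hz₂
  exact wsign_mul_ne_neg_one_of_arc he huniq hS heS hT₁ hT₂ (fun v hv hvS => hT₁C v hv (hSC hvS))
    (fun v hv hvS => hT₂C v hv (hSC hvS)) hf₁ hf₁C hf₂ hf₂C

lemma wsign_eq_one_of_two_mem_support (hC : C.IsCycle) (he : e ∈ C.edges)
    (huniq : NoOtherPositiveCircle σ e C) {N : G.Walk u u} (hN : N.IsCycle)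
    (hNC : ∀ f ∈ N.edges, f ∉ C.edges) (hxy : x ≠ y) (hxN : x ∈ N.support)
    (hxC : x ∈ C.support) (hyN : y ∈ N.support) (hyC : y ∈ C.support) : wsign σ N = 1 := by
  obtain ⟨S, hS, heS, -⟩ := hC.exists_isPath_mem_edges he hxC hyC hxy
  obtain ⟨x', y', S', hx'y', hx', hy', hS', heS', hS'N⟩ :=
    hS.exists_isPath_mem_edges_inter_subset {v | v ∈ N.support} hxy hxN hyN heS
  obtain ⟨T₁, T₂, hT₁, hT₂, hT₁N, hT₂N, hT₁E, hT₂E, hT⟩ :=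
    (hN.rotate hy').exists_isPath_pair_wsign_mul (σ := σ)
      ((mem_support_rotate_iff ..).mpr hx') hx'y'
  have hedge (T : G.Walk y' x') (hTE : T.edges ⊆ (N.rotate y' hy').edges) :
      ∃ f ∈ T.edges, f ∉ C.edges := by
    obtain ⟨f, hf, -⟩ := (mem_support_iff_exists_mem_edges_of_not_nil
      (not_nil_of_ne hx'y'.symm)).mp T.start_mem_support
    exact ⟨f, hf, hNC f ((N.rotate_edges y' hy').perm.mem_iff.mp (hTE hf))⟩
  have hinter (T : G.Walk y' x') (hTN : T.support ⊆ (N.rotate y' hy').support) :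
      ∀ v ∈ T.support, v ∈ S'.support → v = y' ∨ v = x' := fun v hv hvS =>
    (hS'N v hvS ((mem_support_rotate_iff ..).mp (hTN hv))).symm
  obtain ⟨f₁, hf₁, hf₁C⟩ := hedge T₁ hT₁E
  obtain ⟨f₂, hf₂, hf₂C⟩ := hedge T₂ hT₂E
  rw [wsign_rotate] at hT
  by_contra hneg
  exact wsign_mul_ne_neg_one_of_arc he huniq hS' heS' hT₁ hT₂ (hinter T₁ hT₁N) (hinter T₂ hT₂N)
    hf₁ hf₁C hf₂ hf₂C (hT.trans ((Int.units_eq_one_or _).resolve_left hneg))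

structure IsTether (C : G.Walk a a) (N : G.Walk u u) (P : G.Walk u y) : Prop where
  isPathBetween : P.IsPathBetween {v | v ∈ N.support} {v | v ∈ C.support}
  eq_of_mem : ∀ v ∈ N.support, v ∈ C.support → v = u

variable {N : G.Walk u u} {P : G.Walk u y} {B : G.Walk z q}

omit [DecidableEq V] in
lemma IsTether.isPath_reverse_append_append (hL : IsTether C N P)
    (hB : B.IsPathBetween {v | v ∈ N.support} ({v | v ∈ C.support} ∪ {v | v ∈ P.support}))
    (hqP : q ∉ P.support) {R : G.Walk u z} (hR : R.IsPath) (hRN : R.support ⊆ N.support) :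
    (P.reverse.append (R.append B)).IsPath ∧
      ∀ v ∈ (P.reverse.append (R.append B)).support, v ∈ C.support → v = y ∨ v = q := by
  obtain ⟨⟨hP, -, -, hPN, hPC⟩, hNC⟩ := hL
  have hRB : (R.append B).IsPath := hR.append hB.isPath fun v hvR hvB => hB.eq_start v hvB (hRN hvR)
  refine ⟨hP.reverse.append hRB fun v hvP hv => ?_, fun v hv hvC => ?_⟩
  · rw [support_reverse, List.mem_reverse] at hvP
    rcases (mem_support_append_iff _ _).mp hv with hvR | hvB
    · exact hPN v hvP (hRN hvR)
    · exact absurd (hB.eq_end v hvB (Or.inr hvP) ▸ hvP) hqP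
  · simp only [mem_support_append_iff, support_reverse, List.mem_reverse] at hv
    rcases hv with hvP | hvR | hvB
    · exact Or.inl (hPC v hvP hvC)
    · obtain rfl := hNC v (hRN hvR) hvC
      exact Or.inl (hPC v P.start_mem_support hvC)
    · exact Or.inr (hB.eq_end v hvB (Or.inl hvC))

lemma IsTether.isCycle_reverse_append_append (hL : IsTether C N P)
    (hB : B.IsPathBetween {v | v ∈ N.support} ({v | v ∈ C.support} ∪ {v | v ∈ P.support}))
    (huB : u ∉ B.support) (hqP : q ∈ P.support) {R : G.Walk u z} (hR : R.IsPath)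
    (hRN : R.support ⊆ N.support) :
    ((P.takeUntil q hqP).reverse.append (R.append B)).IsCycle ∧
      IsTether C ((P.takeUntil q hqP).reverse.append (R.append B)) (P.dropUntil q hqP) := by
  obtain ⟨⟨hP, -, hy, hPN, hPC⟩, hNC⟩ := hL
  have hJP := P.support_takeUntil_subset_support hqP
  have hKP := P.support_dropUntil_subset_support hqP
  have hJK (v : V) := hP.eq_of_mem_takeUntil_of_mem_dropUntil (x := v) hqP
  have hzu : z ≠ u := fun h => huB (h ▸ B.start_mem_support)
  have hqu : q ≠ u := fun h => huB (h ▸ B.end_mem_support)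
  have hzq : z ≠ q := fun h => hzu (hPN z (h ▸ hqP) hB.start_mem)
  have huK : u ∉ (P.dropUntil q hqP).support := fun h =>
    hqu (hJK u (P.takeUntil q hqP).start_mem_support h).symm
  have hRB : (R.append B).IsPath := hR.append hB.isPath fun v hvR hvB => hB.eq_start v hvB (hRN hvR)
  have hBP (v : V) (hvB : v ∈ B.support) (hvP : v ∈ P.support) : v = q :=
    hB.eq_end v hvB (Or.inr hvP)
  refine ⟨(hP.takeUntil hqP).reverse.isCycle_append_of_inter hRB ?_ (Or.inr ?_),
    ⟨⟨hP.dropUntil hqP, by simp, hy, fun v hvK hv => ?_, fun v hvK => hPC v (hKP hvK)⟩,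
      fun v hv hvC => ?_⟩⟩
  · intro v hvJ hv
    rw [support_reverse, List.mem_reverse] at hvJ
    rcases (mem_support_append_iff _ _).mp hv with hvR | hvB
    · exact Or.inr (hPN v (hJP hvJ) (hRN hvR))
    · exact Or.inl (hBP v hvB (hJP hvJ))
  · rw [length_append]
    have := not_nil_iff_lt_length.mp (not_nil_of_ne (p := R) hzu.symm)
    have := not_nil_iff_lt_length.mp (not_nil_of_ne (p := B) hzq)
    omega
  · simp only [mem_support_append_iff, support_reverse, List.mem_reverse] at hv
    rcases hv with hvJ | hvR | hvB
    · exact hJK v hvJ hvK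
    · exact absurd (hPN v (hKP hvK) (hRN hvR) ▸ hvK) huK
    · exact hBP v hvB (hKP hvK)
  · simp only [mem_support_append_iff, support_reverse, List.mem_reverse] at hv
    rcases hv with hvJ | hvR | hvB
    · obtain rfl := hPC v (hJP hvJ) hvC
      exact hJK v hvJ (P.dropUntil q hqP).end_mem_support
    · obtain rfl := hNC v (hRN hvR) hvC
      exact absurd (hPC v P.start_mem_support hvC ▸ (P.dropUntil q hqP).end_mem_support) huK
    · exact hB.eq_end v hvB (Or.inl hvC)

theorem wsign_eq_one_of_isTether (hG : IsBlock G) (hC : C.IsCycle) (he : e ∈ C.edges)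
    (huniq : NoOtherPositiveCircle σ e C) (hN : N.IsCycle) (hL : IsTether C N P) :
    wsign σ N = 1 := by
  induction hn : P.length using Nat.strong_induction_on generalizing u y with
  | _ n ih =>
  by_contra hneg
  obtain ⟨v₀, hv₀, hv₀u⟩ := hN.exists_mem_support_ne u
  obtain ⟨c₀, hc₀, hc₀u⟩ := hC.exists_mem_support_ne u
  obtain ⟨z, q, B, hB, huB⟩ := hG.exists_isPathBetween_notMem_support (X := {v | v ∈ N.support})
    (Y := {v | v ∈ C.support} ∪ {v | v ∈ P.support}) hv₀ (Or.inl hc₀) hv₀u hc₀u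
  have hzu : z ≠ u := fun h => huB (h ▸ B.start_mem_support)
  obtain ⟨R₁, R₂, hR₁, hR₂, hR₁N, hR₂N, -, -, hR⟩ :=
    hN.exists_isPath_pair_wsign_mul (σ := σ) hB.start_mem hzu
  rw [(Int.units_eq_one_or _).resolve_left hneg] at hR
  by_cases hqP : q ∈ P.support
  · obtain ⟨hM₁, hL₁⟩ := hL.isCycle_reverse_append_append hB huB hqP hR₁ hR₁N
    obtain ⟨hM₂, hL₂⟩ := hL.isCycle_reverse_append_append hB huB hqP hR₂ hR₂N
    have hlt : (P.dropUntil q hqP).length < n :=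
      hn ▸ P.length_dropUntil_lt_length hqP fun h => huB (h ▸ B.end_mem_support)
    rw [← wsign_append_append_mul (P.takeUntil q hqP).reverse R₁ R₂ B] at hR
    rcases Int.units_eq_neg_one_or_of_mul_eq_neg_one hR with h | h
    · exact absurd (ih _ hlt hM₁ hL₁ rfl) (by rw [h]; decide)
    · exact absurd (ih _ hlt hM₂ hL₂ rfl) (by rw [h]; decide)
  · have hzC : z ∉ C.support := fun h => hzu (hL.eq_of_mem z hB.start_mem h)
    obtain ⟨hT₁, hT₁C⟩ := hL.isPath_reverse_append_append hB hqP hR₁ hR₁N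
    obtain ⟨hT₂, hT₂C⟩ := hL.isPath_reverse_append_append hB hqP hR₂ hR₂N
    have hyq : y ≠ q := fun h => hqP (h ▸ P.end_mem_support)
    refine wsign_mul_ne_neg_one_of_inter hC he huniq hyq hL.isPathBetween.end_mem
      (hB.end_mem.resolve_right hqP) hT₁ hT₂ hT₁C hT₂C (z := z)
      (by simp) (by simp) hzC ?_
    rwa [wsign_append_append_mul]

lemma exists_isTether (hG : G.Connected)
    (hNC : ∀ x ∈ N.support, x ∈ C.support → ∀ y ∈ N.support, y ∈ C.support → x = y) :
    ∃ (t : V) (ht : t ∈ N.support) (y : V) (P : G.Walk t y), IsTether C (N.rotate t ht) P := by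
  suffices h : ∃ (t y : V) (P : G.Walk t y),
      P.IsPathBetween {v | v ∈ N.support} {v | v ∈ C.support} ∧
        ∀ v ∈ N.support, v ∈ C.support → v = t by
    obtain ⟨t, y, P, hP, htC⟩ := h
    refine ⟨t, hP.start_mem, y, P, ⟨?_, fun v hv => htC v ((mem_support_rotate_iff ..).mp hv)⟩⟩
    simpa only [mem_support_rotate_iff] using hP
  by_cases hmeet : ∃ x ∈ N.support, x ∈ C.support
  · obtain ⟨x, hxN, hxC⟩ := hmeet
    exact ⟨x, x, nil, ⟨by simp, hxN, hxC, by simp, by simp⟩,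
      fun v hvN hvC => hNC v hvN hvC x hxN hxC⟩
  · obtain ⟨p⟩ := hG.preconnected u a
    obtain ⟨t, y, P, hP, -⟩ := p.exists_isPathBetween (X := {v | v ∈ N.support})
      (Y := {v | v ∈ C.support}) N.start_mem_support C.start_mem_support
    exact ⟨t, y, P, hP, fun v hvN hvC => absurd ⟨v, hvN, hvC⟩ hmeet⟩

theorem wsign_eq_one_of_forall_notMem_edges (hG : IsBlock G) (hC : C.IsCycle) (he : e ∈ C.edges)
    (huniq : NoOtherPositiveCircle σ e C) (hN : N.IsCycle) (hNC : ∀ f ∈ N.edges, f ∉ C.edges) :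
    wsign σ N = 1 := by
  by_cases htwo : ∃ x ∈ N.support, x ∈ C.support ∧ ∃ y ∈ N.support, y ∈ C.support ∧ x ≠ y
  · obtain ⟨x, hxN, hxC, y, hyN, hyC, hxy⟩ := htwo
    exact wsign_eq_one_of_two_mem_support hC he huniq hN hNC hxy hxN hxC hyN hyC
  push Not at htwo
  obtain ⟨t, ht, y, P, hP⟩ := exists_isTether (C := C) hG.1 htwo
  rw [← wsign_rotate N ht]
  exact wsign_eq_one_of_isTether hG hC he huniq (hN.rotate ht) hP

end Battery

theorem bridges_of_positive_battery_balanced_general {V : Type*} [DecidableEq V]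
    (G : SimpleGraph V) (σ : Sym2 V → ℤˣ) (hG : IsBlock G)
    {a : V} (w : G.Walk a a) (hw : w.IsCycle)
    -- `e` lies in a unique positive circle, namely `C`:
    (e : Sym2 V) (he : e ∈ w.edges)
    (hbat : esign σ w.edges.toFinset = 1 ∧
      ∀ s : Finset (Sym2 V), IsCircleOf G s → e ∈ s → esign σ s = 1 →
        s = w.edges.toFinset) :
    -- every bridge of `C` is balanced:
    ∀ F : Set (Sym2 V), IsBridgeOf G w F →
      ∀ (b : V) (w' : G.Walk b b), w'.IsCycle → (∀ f ∈ w'.edges, f ∈ F) →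
        esign σ w'.edges.toFinset = 1 := by
  rintro F hF b N hN hNF
  rw [esign_edges_toFinset hN.isTrail]
  rcases hF with ⟨x, y, -, -, -, -, -, rfl⟩ | ⟨D, -, hDw, -, -, rfl⟩
  · obtain ⟨f, hf, hfxy⟩ := hN.exists_mem_edges_ne s(x, y)
    exact absurd (hNF f hf) hfxy
  · refine wsign_eq_one_of_forall_notMem_edges hG hw he hbat.2 hN fun f hf hfw => ?_
    obtain ⟨-, d, hdD, hdf⟩ := hNF f hf
    exact hDw d hdD (w.mem_support_of_mem_edges hfw hdf)

theorem bridges_of_positive_battery_balanced {V : Type*} [DecidableEq V]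
    (G : SimpleGraph V) (σ : Sym2 V → ℤˣ) (hG : IsBlock G)
    {a : V} (w : G.Walk a a) (hw : w.IsCycle)
    (hnc : ∃ g ∈ G.edgeSet, g ∉ w.edges)
    -- `e` lies in a unique positive circle, namely `C`:
    (e : Sym2 V) (he : e ∈ w.edges)
    (hbat : esign σ w.edges.toFinset = 1 ∧
      ∀ s : Finset (Sym2 V), IsCircleOf G s → e ∈ s → esign σ s = 1 →
        s = w.edges.toFinset) :
    -- every bridge of `C` is balanced:
    ∀ F : Set (Sym2 V), IsBridgeOf G w F →
      ∀ (b : V) (w' : G.Walk b b), w'.IsCycle → (∀ f ∈ w'.edges, f ∈ F) →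
        esign σ w'.edges.toFinset = 1 :=
  bridges_of_positive_battery_balanced_general G σ hG w hw e he hbat
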